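/- arXiv:1707.01825 — 3 statements merged into one kernel-verified Lean document; each statement's English description precedes it below -/
import Mathlib

section
/- Let γ ∈ (0, 1/c) where c ≥ 2 is the number of classes and m ≥ 1 the number of probed examples. Suppose every entry of the probe matrix G ∈ ℝ^{m×c} lies in [γ, 1-(c-1)γ]. Then the quality Q(G) := min over distinct one-hot label matrices Y ≠ Y' of |f(Y,G) - f(Y',G)|, where f(Y,G) = -(1/m)·Σᵢ Σⱼ yᵢⱼ log gᵢⱼ, satisfies Q(G) ≤ (log(1-(c-1)γ) - log γ)/(c^m - 1). -/
/-- A one-hot label matrix: entries in {0,1}, each row sums to 1. -/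
def IsOneHot {m c : ℕ} (Y : Fin m → Fin c → ℝ) : Prop :=
  (∀ i j, Y i j = 0 ∨ Y i j = 1) ∧ ∀ i, ∑ j, Y i j = 1

/-- Average log-loss of guesses `G` against one-hot labels `Y`. -/
noncomputable def logLoss {m c : ℕ} (Y G : Fin m → Fin c → ℝ) : ℝ :=
  -(1 / (m : ℝ)) * ∑ i, ∑ j, Y i j * Real.log (G i j)

lemma pigeon {α : Type*} [Fintype α] (h2 : 2 ≤ Fintype.card α) (g : α → ℝ) (A B : ℝ)
    (hg : ∀ a, g a ∈ Set.Icc A B) :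
    ∃ a b : α, a ≠ b ∧ |g a - g b| ≤ (B - A) / ((Fintype.card α : ℝ) - 1) := by
  by_contra hcon
  push_neg at hcon
  set n := Fintype.card α with hn
  set d := (B - A) / ((n : ℝ) - 1) with hd
  have hn1 : (1 : ℝ) ≤ (n : ℝ) - 1 := by
    have : (2 : ℝ) ≤ (n : ℝ) := by exact_mod_cast h2
    linarith
  have e : Fin n ≃ α := (Fintype.equivFin α).symm
  set g' : Fin n → ℝ := g ∘ e with hg'
  set s := Tuple.sort g' with hs
  set h : Fin n → ℝ := g' ∘ s with hh
  have hmono : Monotone h := Tuple.monotone_sort g'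
  have hnpos : 0 < n := by omega
  have hlt : n - 1 < n := by omega
  set f : ℕ → ℝ := fun k => h ⟨min k (n - 1), lt_of_le_of_lt (min_le_right _ _) hlt⟩ with hf
  have key : ∀ k ∈ Finset.range (n - 1), d < f (k + 1) - f k := by
    intro k hk
    simp only [Finset.mem_range] at hk
    have hk1 : min k (n-1) = k := by omega
    have hk2 : min (k+1) (n-1) = k+1 := by omega
    have hfk : f k = h ⟨k, by omega⟩ := by
      simp only [hf]; congr 1; simp [Fin.mk.injEq]; omega
    have hfk2 : f (k+1) = h ⟨k+1, by omega⟩ := by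
      simp only [hf]; congr 1; simp [Fin.mk.injEq]; omega
    have hne : s ⟨k, by omega⟩ ≠ s ⟨k+1, by omega⟩ := by
      intro hcontra
      have := (Equiv.injective s) hcontra
      simp [Fin.ext_iff] at this
    have hne' : e (s ⟨k, by omega⟩) ≠ e (s ⟨k+1, by omega⟩) :=
      fun hcontra => hne (e.injective hcontra)
    have habs := hcon (e (s ⟨k, by omega⟩)) (e (s ⟨k+1, by omega⟩)) hne'
    have hle : h ⟨k, by omega⟩ ≤ h ⟨k+1, by omega⟩ := hmono (by simp [Fin.le_def])
    have : |h ⟨k, by omega⟩ - h ⟨k+1, by omega⟩| = h ⟨k+1, by omega⟩ - h ⟨k, by omega⟩ := by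
      rw [abs_sub_comm]; exact abs_of_nonneg (by linarith)
    rw [hfk, hfk2]
    have : |g (e (s ⟨k, by omega⟩)) - g (e (s ⟨k+1, by omega⟩))|
        = h ⟨k+1, by omega⟩ - h ⟨k, by omega⟩ := this
    linarith [habs, this.symm ▸ habs]
  have hsum : ∑ k ∈ Finset.range (n - 1), (f (k + 1) - f k) = f (n - 1) - f 0 :=
    Finset.sum_range_sub f (n-1)
  have hsumlt : ∑ k ∈ Finset.range (n - 1), d < ∑ k ∈ Finset.range (n - 1), (f (k+1) - f k) := by
    apply Finset.sum_lt_sum_of_nonempty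
    · exact Finset.nonempty_range_iff.mpr (by omega)
    · exact key
  have hcard : ((n - 1 : ℕ) : ℝ) = (n : ℝ) - 1 := by
    push_cast [Nat.cast_sub (by omega : 1 ≤ n)]; ring
  have hconst : ∑ k ∈ Finset.range (n - 1), d = ((n:ℝ) - 1) * d := by
    rw [Finset.sum_const, Finset.card_range, nsmul_eq_mul, hcard]
  have hBA : ((n:ℝ) - 1) * d = B - A := by
    rw [hd]; field_simp
  have hbound : f (n - 1) - f 0 ≤ B - A := by
    have h1 := hg (e (s ⟨min (n-1) (n-1), lt_of_le_of_lt (min_le_right _ _) hlt⟩))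
    have h2 := hg (e (s ⟨min 0 (n-1), lt_of_le_of_lt (min_le_right _ _) hlt⟩))
    simp only [Set.mem_Icc] at h1 h2
    simp only [hf, hh, hg', Function.comp]
    linarith [h1.2, h2.1]
  rw [hsum, hconst, hBA] at hsumlt
  linarith

/-- The quality Q(G) (min gap over distinct one-hot labelings) is at most
`(log(1-(c-1)γ) - log γ)/(c^m - 1)`: some distinct pair is at most that far apart. -/
theorem stmt0 (m c : ℕ) (hm : 1 ≤ m) (hc : 2 ≤ c) (γ : ℝ)
    (hγ0 : 0 < γ) (hγc : γ < 1 / (c : ℝ))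
    (G : Fin m → Fin c → ℝ)
    (hG : ∀ i j, G i j ∈ Set.Icc γ (1 - ((c : ℝ) - 1) * γ)) :
    ∃ Y Y' : Fin m → Fin c → ℝ, IsOneHot Y ∧ IsOneHot Y' ∧ Y ≠ Y' ∧
      |logLoss Y G - logLoss Y' G| ≤
        (Real.log (1 - ((c : ℝ) - 1) * γ) - Real.log γ) / ((c : ℝ) ^ m - 1) := by
  set B' : ℝ := 1 - ((c : ℝ) - 1) * γ with hB'
  have hcpos : (0:ℝ) < c := by positivity
  have hγB : γ ≤ B' := by
    have : γ * c < 1 := by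
      rw [lt_div_iff₀ hcpos] at hγc; linarith
    rw [hB']; nlinarith
  have hB'pos : 0 < B' := lt_of_lt_of_le hγ0 hγB
  -- one-hot family
  set Y : (Fin m → Fin c) → (Fin m → Fin c → ℝ) :=
    fun σ i j => if j = σ i then 1 else 0 with hY
  have hOH : ∀ σ, IsOneHot (Y σ) := by
    intro σ
    constructor
    · intro i j; by_cases h : j = σ i <;> simp [hY, h]
    · intro i; simp [hY]
  have hinj : Function.Injective Y := by
    intro σ τ hστ
    funext i
    by_contra hne
    have := congrFun (congrFun hστ i) (σ i)
    simp [hY, hne] at this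
  -- logLoss formula
  have hmpos : (0:ℝ) < m := by exact_mod_cast hm
  have hloss : ∀ σ, logLoss (Y σ) G = -(1 / (m:ℝ)) * ∑ i, Real.log (G i (σ i)) := by
    intro σ
    unfold logLoss
    congr 1
    apply Finset.sum_congr rfl
    intro i _
    rw [Finset.sum_eq_single (σ i)]
    · simp [hY]
    · intro j _ hj; simp [hY, hj]
    · simp
  -- bounds
  set A : ℝ := -Real.log B' with hA
  set Bb : ℝ := -Real.log γ with hBb
  have hbound : ∀ σ, logLoss (Y σ) G ∈ Set.Icc A Bb := by
    intro σ
    rw [hloss σ]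
    have hlow : ∀ i, Real.log γ ≤ Real.log (G i (σ i)) :=
      fun i => Real.log_le_log hγ0 (hG i (σ i)).1
    have hhigh : ∀ i, Real.log (G i (σ i)) ≤ Real.log B' :=
      fun i => Real.log_le_log (lt_of_lt_of_le hγ0 (hG i (σ i)).1) (hG i (σ i)).2
    have hs1 : (m:ℝ) * Real.log γ ≤ ∑ i, Real.log (G i (σ i)) := by
      calc (m:ℝ) * Real.log γ = ∑ _i : Fin m, Real.log γ := by
            simp [Finset.sum_const, mul_comm]
        _ ≤ _ := Finset.sum_le_sum (fun i _ => hlow i)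
    have hs2 : ∑ i, Real.log (G i (σ i)) ≤ (m:ℝ) * Real.log B' := by
      calc ∑ i, Real.log (G i (σ i)) ≤ ∑ _i : Fin m, Real.log B' :=
            Finset.sum_le_sum (fun i _ => hhigh i)
        _ = (m:ℝ) * Real.log B' := by simp [Finset.sum_const, mul_comm]
    constructor
    · rw [hA]
      have := mul_le_mul_of_nonneg_left hs2 (le_of_lt (by positivity : (0:ℝ) < 1/(m:ℝ)))
      have hmm : (1/(m:ℝ)) * ((m:ℝ) * Real.log B') = Real.log B' := by
        field_simp
      nlinarith [this]
    · rw [hBb]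
      have := mul_le_mul_of_nonneg_left hs1 (le_of_lt (by positivity : (0:ℝ) < 1/(m:ℝ)))
      have hmm : (1/(m:ℝ)) * ((m:ℝ) * Real.log γ) = Real.log γ := by
        field_simp
      nlinarith [this]
  -- pigeonhole on Fin m → Fin c
  have hcard : Fintype.card (Fin m → Fin c) = c ^ m := by simp
  have h2 : 2 ≤ Fintype.card (Fin m → Fin c) := by
    rw [hcard]
    exact le_trans hc (Nat.le_self_pow (by omega) c)
  obtain ⟨σ, τ, hστ, hle⟩ := pigeon h2 (fun σ => logLoss (Y σ) G) A Bb hbound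
  refine ⟨Y σ, Y τ, hOH σ, hOH τ, fun h => hστ (hinj h), ?_⟩
  have hcast : ((Fintype.card (Fin m → Fin c) : ℝ)) = (c:ℝ) ^ m := by
    rw [hcard]; push_cast; ring
  rw [hcast] at hle
  have : Bb - A = Real.log B' - Real.log γ := by rw [hA, hBb]; ring
  rw [this] at hle
  exact hle
end

section
/- Suppose guesses are 1/c for all examples except a probe example i whose guess row ŷᵢ has ŷᵢⱼ ≠ 1/c for the true class j of i. If the oracle reports the average log-loss over a subset S and the reported loss equals log c, then i ∉ S; conversely if i ∈ S the reported loss differs from log c. -/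
open Finset

/-- Writing each term as `a + (f k - a)`, only the off-value term at `i` can spoil the sum. -/
theorem Finset.sum_eq_card_nsmul_iff_of_eq_off {ι M : Type*} [AddCommGroup M] {S : Finset ι}
    {f : ι → M} {a : M} {i : ι} (hf : ∀ k, k ≠ i → f k = a) :
    ∑ k ∈ S, f k = #S • a ↔ (i ∈ S → f i = a) := by
  rw [← sub_eq_zero, ← sum_const, ← sum_sub_distrib]
  have hoff : ∀ k ∈ S, k ≠ i → f k - a = 0 := fun k _ hk => sub_eq_zero.mpr (hf k hk)
  by_cases hi : i ∈ S
  · simp only [sum_eq_single_of_mem i hi hoff, sub_eq_zero, hi, forall_const]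
  · simp only [sum_eq_zero fun k hk => hoff k hk (ne_of_mem_of_not_mem hk hi), hi,
      IsEmpty.forall_iff]

/-- Membership test: with uniform guesses except at a probe example `i` whose
guess on its true class differs from `1/c`, the reported loss equals `log c`
iff `i` is not in the evaluated subset. -/
theorem stmt9 (c : ℕ) (S : Finset ℕ) (hS : S.Nonempty) (i : ℕ)
    (y : ℕ → Fin c) (Yh : ℕ → Fin c → ℝ)
    (hpos : 0 < Yh i (y i)) (hne : Yh i (y i) ≠ 1 / (c : ℝ))
    (huniform : ∀ k, k ≠ i → ∀ j, Yh k j = 1 / (c : ℝ))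
    (ℓ : ℝ) (hℓ : ℓ = -(1 / (S.card : ℝ)) * ∑ k ∈ S, Real.log (Yh k (y k))) :
    ℓ = Real.log c ↔ i ∉ S := by
  have hc : (0 : ℝ) < c := by exact_mod_cast (y i).pos
  have hcard : (#S : ℝ) ≠ 0 := by exact_mod_cast hS.card_pos.ne'
  have huniform_log : ∀ k, k ≠ i → Real.log (Yh k (y k)) = -Real.log c := fun k hk => by
    rw [huniform k hk, one_div, Real.log_inv]
  have hprobe_log : Real.log (Yh i (y i)) ≠ -Real.log c := fun h => hne <| by
    rw [← Real.exp_log hpos, h, Real.exp_neg, Real.exp_log hc, one_div]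
  calc ℓ = Real.log c ↔ ∑ k ∈ S, Real.log (Yh k (y k)) = #S • -Real.log c := by
        rw [hℓ, nsmul_eq_mul]
        constructor <;> intro h
        · field_simp at h; linarith
        · field_simp; linarith
    _ ↔ (i ∈ S → Real.log (Yh i (y i)) = -Real.log c) :=
        sum_eq_card_nsmul_iff_of_eq_off huniform_log
    _ ↔ i ∉ S := by simp only [hprobe_log, imp_false]
end

section
/- For c = 2 classes and γ = 10⁻¹⁵, any probe matrix G ∈ [γ, 1-γ]^{m×2} with m ≥ 1 has quality Q(G) ≤ (log(1-γ) - log γ)/(2^m - 1) < 35/(2^m - 1); in particular for m ≥ 12, Q(G) < 0.01. -/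
/-- For `c = 2` and `γ = 10⁻¹⁵`: the quality of any probe matrix is at most
`(log(1-γ) - log γ)/(2^m - 1) < 35/(2^m - 1)`, hence `< 0.01` for `m ≥ 12`. -/
theorem stmt11 (m : ℕ) (hm : 1 ≤ m) (γ : ℝ) (hγ : γ = (10 : ℝ) ^ (-15 : ℤ))
    (G : Fin m → Fin 2 → ℝ)
    (hG : ∀ i j, G i j ∈ Set.Icc γ (1 - γ)) :
    ∃ Y Y' : Fin m → Fin 2 → ℝ, IsOneHot Y ∧ IsOneHot Y' ∧ Y ≠ Y' ∧
      |logLoss Y G - logLoss Y' G| ≤ (Real.log (1 - γ) - Real.log γ) / (2 ^ m - 1) ∧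
      |logLoss Y G - logLoss Y' G| < 35 / (2 ^ m - 1) ∧
      (12 ≤ m → |logLoss Y G - logLoss Y' G| < 0.01) := by
  have hγ0 : (0:ℝ) < γ := by rw [hγ]; positivity
  have hγ1 : γ < 1/2 := by rw [hγ]; norm_num
  have h1γ : (0:ℝ) < 1 - γ := by linarith
  have hm0 : (0:ℝ) < (m:ℝ) := by exact_mod_cast hm
  set L : ℝ := Real.log (1 - γ) - Real.log γ with hLdef
  have hLpos : 0 < L := by
    have := Real.log_lt_log hγ0 (by linarith : γ < 1 - γ)
    rw [hLdef]; linarith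
  have hL35 : L < 35 := by
    have h1 : Real.log (1 - γ) ≤ 0 := Real.log_nonpos (by linarith) (by linarith)
    have h2 : Real.log γ = -(15 * Real.log 10) := by
      rw [hγ, Real.log_zpow]; push_cast; ring
    have h3 : Real.log 10 < 7/3 := by
      rw [Real.log_lt_iff_lt_exp (by norm_num)]
      have hx : (0:ℝ) < Real.exp (7/3) := Real.exp_pos _
      have h4 : (10:ℝ)^(3:ℕ) < Real.exp (7/3) ^ (3:ℕ) := by
        have e7 : Real.exp (7/3) ^ (3:ℕ) = Real.exp 7 := by
          rw [← Real.exp_nat_mul]; norm_num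
        have e1 : Real.exp 7 = Real.exp 1 ^ (7:ℕ) := by
          rw [← Real.exp_nat_mul]; norm_num
        have hb : (2.7182818283:ℝ) ^ (7:ℕ) < Real.exp 1 ^ (7:ℕ) := by
          have := Real.exp_one_gt_d9
          exact pow_lt_pow_left₀ this (by norm_num) (by norm_num)
        rw [e7, e1]
        nlinarith [hb]
      exact lt_of_pow_lt_pow_left₀ 3 (le_of_lt hx) h4
    rw [hLdef]; nlinarith
  have hN1 : (1:ℝ) < 2 ^ m := one_lt_pow₀ (by norm_num) (by omega)
  have hB : (0:ℝ) < (2:ℝ) ^ m - 1 := by linarith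
  set d : ℝ := L / ((2:ℝ) ^ m - 1) with hddef
  have hd : 0 < d := div_pos hLpos hB
  -- the family of one-hot labelings
  set Yf : (Fin m → Fin 2) → Fin m → Fin 2 → ℝ :=
    fun σ i j => if j = σ i then 1 else 0 with hYf
  have hone : ∀ σ, IsOneHot (Yf σ) := by
    intro σ
    constructor
    · intro i j; by_cases h : j = σ i <;> simp [hYf, h]
    · intro i; simp [hYf]
  set F : (Fin m → Fin 2) → ℝ := fun σ => logLoss (Yf σ) G with hFdef
  have hF : ∀ σ, F σ = -(1/(m:ℝ)) * ∑ i, Real.log (G i (σ i)) := by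
    intro σ
    simp only [hFdef, logLoss]
    congr 1
    apply Finset.sum_congr rfl
    intro i _
    simp [hYf, ite_mul, Finset.sum_ite_eq']
  set a : ℝ := -Real.log (1 - γ) with hadef
  have hFb : ∀ σ, a ≤ F σ ∧ F σ ≤ -Real.log γ := by
    intro σ
    have hub : (∑ i, Real.log (G i (σ i))) ≤ (m:ℝ) * Real.log (1 - γ) := by
      calc (∑ i, Real.log (G i (σ i))) ≤ ∑ _i : Fin m, Real.log (1 - γ) :=
            Finset.sum_le_sum (fun i _ => Real.log_le_log
              (lt_of_lt_of_le hγ0 (hG i (σ i)).1) (hG i (σ i)).2)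
        _ = (m:ℝ) * Real.log (1 - γ) := by simp [Finset.sum_const, Finset.card_univ]
    have hlb : (m:ℝ) * Real.log γ ≤ (∑ i, Real.log (G i (σ i))) := by
      calc (m:ℝ) * Real.log γ = ∑ _i : Fin m, Real.log γ := by
            simp [Finset.sum_const, Finset.card_univ]
        _ ≤ ∑ i, Real.log (G i (σ i)) :=
            Finset.sum_le_sum (fun i _ => Real.log_le_log hγ0 (hG i (σ i)).1)
    have e1 : -(1/(m:ℝ)) * (∑ i, Real.log (G i (σ i)))
        = (-(∑ i, Real.log (G i (σ i)))) / (m:ℝ) := by ring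
    constructor
    · rw [hF σ, hadef, e1, le_div_iff₀ hm0]
      nlinarith [hub]
    · rw [hF σ, e1, div_le_iff₀ hm0]
      nlinarith [hlb]
  have hx0 : ∀ σ, 0 ≤ F σ - a := fun σ => by linarith [(hFb σ).1]
  have hxL : ∀ σ, F σ - a ≤ L := fun σ => by
    have h := (hFb σ).2
    rw [hLdef, hadef]; linarith
  set N : ℕ := 2 ^ m with hNdef
  have hN2 : 2 ≤ N := by
    have h := Nat.one_lt_two_pow_iff.mpr (by omega : m ≠ 0)
    omega
  have hNR : ((N:ℝ)) = (2:ℝ) ^ m := by rw [hNdef]; norm_cast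
  -- pigeonhole
  obtain ⟨σ, -, σ', -, hne, heq⟩ :=
    Finset.exists_ne_map_eq_of_card_lt_of_maps_to
      (s := (Finset.univ : Finset (Fin m → Fin 2))) (t := Finset.range (N - 1))
      (f := fun σ => min (⌊(F σ - a)/d⌋.toNat) (N - 2))
      (by
        have hcard : (Finset.univ : Finset (Fin m → Fin 2)).card = 2 ^ m := by
          simp [Finset.card_univ]
        rw [hcard, Finset.card_range]
        omega)
      (fun σ _ => Finset.mem_range.mpr
        (Nat.lt_of_le_of_lt (min_le_right _ _) (by omega)))
  -- bucket bounds
  have hbnd : ∀ τ : Fin m → Fin 2,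
      ((min (⌊(F τ - a)/d⌋.toNat) (N - 2) : ℕ) : ℝ) * d ≤ F τ - a ∧
      F τ - a ≤ ((min (⌊(F τ - a)/d⌋.toNat) (N - 2) : ℕ) + 1 : ℝ) * d := by
    intro τ
    set x : ℝ := F τ - a with hxdef
    set k : ℕ := min (⌊x/d⌋.toNat) (N - 2) with hkdef
    have hxd0 : 0 ≤ x / d := div_nonneg (hx0 τ) (le_of_lt hd)
    have hfl0 : 0 ≤ ⌊x/d⌋ := Int.floor_nonneg.mpr hxd0
    have hcast : ((⌊x/d⌋.toNat : ℕ) : ℝ) = ((⌊x/d⌋ : ℤ) : ℝ) := by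
      exact_mod_cast Int.toNat_of_nonneg hfl0
    constructor
    · have h1 : k ≤ ⌊x/d⌋.toNat := by rw [hkdef]; exact min_le_left _ _
      have h2 : ((k : ℕ) : ℝ) ≤ x / d := by
        calc ((k : ℕ) : ℝ) ≤ ((⌊x/d⌋.toNat : ℕ) : ℝ) := by exact_mod_cast h1
          _ = ((⌊x/d⌋ : ℤ) : ℝ) := hcast
          _ ≤ x / d := Int.floor_le _
      calc ((k:ℕ) : ℝ) * d ≤ (x/d) * d := mul_le_mul_of_nonneg_right h2 (le_of_lt hd)
        _ = x := by field_simp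
    · by_cases hc : ⌊x/d⌋.toNat ≤ N - 2
      · have hb : k = ⌊x/d⌋.toNat := by rw [hkdef]; omega
        have hlt : x / d < ((⌊x/d⌋ : ℤ) : ℝ) + 1 := Int.lt_floor_add_one _
        have h2 : x / d < ((k:ℕ) : ℝ) + 1 := by rw [hb, hcast]; exact hlt
        have := (div_lt_iff₀ hd).mp h2
        linarith
      · have hb : k = N - 2 := by rw [hkdef]; omega
        have hcb : ((k : ℕ) : ℝ) + 1 = (N:ℝ) - 1 := by
          rw [hb, Nat.cast_sub hN2]; push_cast; ring
        have hLd : L = ((N:ℝ) - 1) * d := by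
          rw [hddef, hNR]; field_simp
        calc x ≤ L := hxL τ
          _ = (((k:ℕ) : ℝ) + 1) * d := by rw [hLd, hcb]
  have h1 := hbnd σ
  have h2 := hbnd σ'
  rw [← heq] at h2
  have habs : |F σ - F σ'| ≤ d := by
    rw [abs_le]
    constructor <;> linarith [h1.1, h1.2, h2.1, h2.2]
  have hlt35 : d < 35 / ((2:ℝ)^m - 1) := by
    rw [hddef, div_lt_div_iff₀ hB hB]
    nlinarith
  refine ⟨Yf σ, Yf σ', hone σ, hone σ', ?_, habs, lt_of_le_of_lt habs hlt35, ?_⟩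
  · intro h
    apply hne
    funext i
    have h2 := congrFun (congrFun h i) (σ i)
    simp only [hYf, if_pos rfl] at h2
    by_contra hc
    rw [if_neg hc] at h2
    norm_num at h2
  · intro h12
    have h4096 : (4096:ℝ) ≤ 2^m := by
      calc (4096:ℝ) = 2^(12:ℕ) := by norm_num
        _ ≤ 2^m := pow_le_pow_right₀ (by norm_num) h12
    have hsmall : 35/((2:ℝ)^m-1) ≤ 0.01 := by
      rw [div_le_iff₀ hB]; nlinarith
    calc |F σ - F σ'| ≤ d := habs
      _ < 35/((2:ℝ)^m-1) := hlt35
      _ ≤ 0.01 := hsmall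
end
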